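/- Let L₁ be the 3-dimensional complex ω-Lie algebra with ordered basis (x,y,z) defined by [x,y] = y, [x,z] = 0, [y,z] = z and ω(x,y) = 1, ω(x,z) = ω(y,z) = 0. A linear operator R on L₁, with matrix entries r_{ij} ∈ ℂ determined by R(e_i) = Σ_j r_{ij} e_j relative to (e₁,e₂,e₃) = (x,y,z), is a compatible Rota-Baxter operator of weight 0 on L₁ if and only if r₃₁ = r₃₂ = r₃₃ = 0, r₁₁ + r₂₂ = 0, r₁₂·r₂₁ + r₂₂² = 0, and r₁₂·r₂₃ − r₁₃·r₂₂ = 0. -/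
import Mathlib


/-- The bracket of the 3-dimensional complex ω-Lie algebra `L₁`, with ordered basis
`(x, y, z) = (e₀, e₁, e₂)`, determined by `[x,y] = y`, `[x,z] = 0`, `[y,z] = z`. -/
def L1bracket (u v : Fin 3 → ℂ) : Fin 3 → ℂ :=
  ![0, u 0 * v 1 - u 1 * v 0, u 1 * v 2 - u 2 * v 1]

/-- The form `ω` of `L₁`, determined by `ω(x,y) = 1`, `ω(x,z) = ω(y,z) = 0`. -/
def L1omega (u v : Fin 3 → ℂ) : ℂ := u 0 * v 1 - u 1 * v 0

/-- A linear operator `R` on `L₁` is a compatible Rota-Baxter operator of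
weight 0 iff its matrix entries `r i j = R(eᵢ)ⱼ` satisfy
`r₃₁ = r₃₂ = r₃₃ = 0`, `r₁₁ + r₂₂ = 0`, `r₁₂r₂₁ + r₂₂² = 0`, `r₁₂r₂₃ − r₁₃r₂₂ = 0`. -/
theorem compatible_rotaBaxter_weight_zero_on_L1_iff
    (R : (Fin 3 → ℂ) →ₗ[ℂ] (Fin 3 → ℂ))
    (r : Fin 3 → Fin 3 → ℂ) (hr : ∀ i j, r i j = R (Pi.single i 1) j) :
    ((∀ u v, L1bracket (R u) (R v) = R (L1bracket (R u) v + L1bracket u (R v))) ∧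
      (∀ u v, L1omega (R u) v + L1omega u (R v) = 0)) ↔
    (r 2 0 = 0 ∧ r 2 1 = 0 ∧ r 2 2 = 0 ∧ r 0 0 + r 1 1 = 0 ∧
      r 0 1 * r 1 0 + r 1 1 ^ 2 = 0 ∧ r 0 1 * r 1 2 - r 0 2 * r 1 1 = 0) := by
  have hRu : ∀ (u : Fin 3 → ℂ) (j : Fin 3),
      R u j = u 0 * r 0 j + u 1 * r 1 j + u 2 * r 2 j := by
    intro u j
    have hu : u = u 0 • (Pi.single (0:Fin 3) (1:ℂ) : Fin 3 → ℂ)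
        + u 1 • (Pi.single (1:Fin 3) (1:ℂ) : Fin 3 → ℂ)
        + u 2 • (Pi.single (2:Fin 3) (1:ℂ) : Fin 3 → ℂ) := by
      funext i; fin_cases i <;> simp [Pi.single_apply]
    conv_lhs => rw [hu]
    simp [hr, mul_comm]
  constructor
  · rintro ⟨h1, h2⟩
    have E20 := h2 (Pi.single 2 1) (Pi.single 1 1)
    simp [L1omega, hRu, Pi.single_apply] at E20
    have E21 := h2 (Pi.single 0 1) (Pi.single 2 1)
    simp [L1omega, hRu, Pi.single_apply] at E21
    have EA := h2 (Pi.single 0 1) (Pi.single 1 1)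
    simp [L1omega, hRu, Pi.single_apply] at EA
    have E22 := congrFun (h1 (Pi.single 1 1) (Pi.single 2 1)) 2
    simp [L1bracket, hRu, Pi.single_apply] at E22
    have EB := congrFun (h1 (Pi.single 0 1) (Pi.single 1 1)) 1
    simp [L1bracket, hRu, Pi.single_apply] at EB
    have EC := congrFun (h1 (Pi.single 0 1) (Pi.single 1 1)) 2
    simp [L1bracket, hRu, Pi.single_apply] at EC
    have h22 : r 2 2 = 0 := by
      have hsq : r 2 2 ^ 2 = 0 := by
        linear_combination -E22 - r 1 2 * E21 + r 1 2 * E20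
      exact pow_eq_zero_iff (two_ne_zero) |>.mp hsq
    refine ⟨E20, E21, h22, EA, ?_, ?_⟩
    · linear_combination -EB + r 0 2 * E21
    · linear_combination EC + r 1 2 * EA - r 0 2 * h22
  · rintro ⟨h20, h21, h22, hA, hB, hC⟩
    refine ⟨fun u v => ?_, fun u v => ?_⟩
    · funext j
      fin_cases j
      · simp [L1bracket, hRu, h20, h21, h22]
        left
        linear_combination (u 0 * v 1 - u 1 * v 0) * hA
      · simp [L1bracket, hRu, h20, h21, h22]
        linear_combination (u 1 * v 0 - u 0 * v 1) * hB
      · simp [L1bracket, hRu, h20, h21, h22]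
        linear_combination (u 0 * v 1 - u 1 * v 0) * hC + r 1 2 * (u 1 * v 0 - u 0 * v 1) * hA
    · simp only [L1omega, hRu]
      linear_combination (u 2 * v 1 - u 1 * v 2) * h20 + (u 0 * v 2 - u 2 * v 0) * h21 +
        (u 0 * v 1 - u 1 * v 0) * hA
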